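/- For any simplicial complex K and vertex v of K, the Morse complex M(K ∨_v ℓ) of K with a leaf ℓ attached at v strongly collapses to the generalized Morse complex f((H(K) − v) ⊔ H(ℓ)), where H(K) − v is the Hasse diagram of K with the node v deleted. -/

import Mathlib

open Finset

/-- An abstract simplicial complex on vertex type `V`. -/
structure SComplex (V : Type*) where
  faces : Finset V → Prop
  not_empty : ¬ faces ∅
  down_closed : ∀ {σ τ : Finset V}, faces τ → σ ⊆ τ → σ.Nonempty → faces σ

/-- The complex generated by a set of simplices (downward closure). -/
def ofGens {V : Type*} (gens : Set (Finset V)) : SComplex V where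
  faces σ := σ.Nonempty ∧ ∃ τ ∈ gens, σ ⊆ τ
  not_empty h := by simpa using h.1
  down_closed := by
    rintro σ τ ⟨-, τ', hτ', hsub'⟩ hsub hne
    exact ⟨hne, τ', hτ', hsub.trans hsub'⟩

/-- A primitive (gradient) vector field on `K`: a single regular pair `(σ, τ)`
with `σ` a codimension-one face of `τ`. -/
structure VPair {V : Type*} (K : SComplex V) where
  lo : Finset V
  hi : Finset V
  lo_face : K.faces lo
  hi_face : K.faces hi
  lo_sub : lo ⊆ hi
  card_eq : hi.card = lo.card + 1

noncomputable instance {V : Type*} (K : SComplex V) : DecidableEq (VPair K) :=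
  Classical.decEq _

/-- Two primitive pairs share no simplex. -/
def VPair.Compatible {V : Type*} {K : SComplex V} (p q : VPair K) : Prop :=
  p.lo ≠ q.lo ∧ p.lo ≠ q.hi ∧ p.hi ≠ q.lo ∧ p.hi ≠ q.hi

/-- A discrete vector field: each simplex occurs in at most one pair. -/
def IsDVF {V : Type*} {K : SComplex V} (W : Set (VPair K)) : Prop :=
  ∀ p ∈ W, ∀ q ∈ W, p ≠ q → VPair.Compatible p q

/-- Existence of a nontrivial closed `V`-path. -/
def HasClosedPath {V : Type*} {K : SComplex V} (W : Set (VPair K)) : Prop :=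
  ∃ k : ℕ, 0 < k ∧ ∃ c : ZMod k → VPair K, (∀ i, c i ∈ W) ∧
    ∀ i, (c (i + 1)).lo ⊆ (c i).hi ∧ (c (i + 1)).lo ≠ (c i).lo ∧
      (c (i + 1)).lo.card + 1 = (c i).hi.card

/-- A gradient vector field: a discrete vector field with no nontrivial closed path. -/
def IsGVF {V : Type*} {K : SComplex V} (W : Set (VPair K)) : Prop :=
  IsDVF W ∧ ¬ HasClosedPath W

/-- The Morse complex of `K`: vertices are primitive gradient vector fields,
simplices are gradient vector fields. -/
def MorseComplex {V : Type*} (K : SComplex V) : SComplex (VPair K) where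
  faces S := S.Nonempty ∧ IsGVF {p | p ∈ S}
  not_empty h := by simpa using h.1
  down_closed := by
    rintro σ τ ⟨hne', hdvf, hnc⟩ hsub hne
    refine ⟨hne, fun p hp q hq hpq => hdvf p (hsub hp) q (hsub hq) hpq, fun h => hnc ?_⟩
    obtain ⟨k, hk, c, hc, hpath⟩ := h
    exact ⟨k, hk, c, fun i => hsub (hc i), hpath⟩

/-- The pure Morse complex: the subcomplex of `MorseComplex K` generated by the
facets of maximum dimension (maximum gradient vector fields). -/
def pureMorse {V : Type*} (K : SComplex V) : SComplex (VPair K) where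
  faces S := (MorseComplex K).faces S ∧ ∃ T : Finset (VPair K), S ⊆ T ∧
      (MorseComplex K).faces T ∧
      ∀ T' : Finset (VPair K), (MorseComplex K).faces T' → T'.card ≤ T.card
  not_empty h := (MorseComplex K).not_empty h.1
  down_closed := by
    rintro σ τ ⟨hτ, T, hsub', hT, hmax⟩ hsub hne
    exact ⟨(MorseComplex K).down_closed hτ hsub hne, T, hsub.trans hsub', hT, hmax⟩

/-- `σ` is a facet (maximal simplex) of `K`. -/
def IsFacet {V : Type*} (K : SComplex V) (σ : Finset V) : Prop :=
  K.faces σ ∧ ∀ τ, K.faces τ → σ ⊆ τ → σ = τ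

/-- `w` dominates `w'`: every facet containing `w'` contains `w`. -/
def Dominates {V : Type*} (K : SComplex V) (w w' : V) : Prop :=
  ∀ σ, IsFacet K σ → w' ∈ σ → w ∈ σ

/-- `K` is minimal: no vertex dominates another vertex. -/
def MinimalComplex {V : Type*} (K : SComplex V) : Prop :=
  ∀ w w' : V, K.faces {w} → K.faces {w'} → w ≠ w' → ¬ Dominates K w w'

/-- Strong collapsibility of a face predicate: a sequence of removals of
dominated vertices reaching a single point. -/
inductive SCAux {V : Type*} : (Finset V → Prop) → Prop
  | point (F : Finset V → Prop) (v : V) (h : ∀ σ, F σ ↔ σ = {v}) : SCAux F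
  | step (F : Finset V → Prop) (w w' : V) (hne : w ≠ w') (hw : F {w}) (hw' : F {w'})
      (hdom : ∀ σ, (F σ ∧ ∀ τ, F τ → σ ⊆ τ → σ = τ) → w' ∈ σ → w ∈ σ)
      (h : SCAux (fun σ => F σ ∧ w' ∉ σ)) : SCAux F

def StronglyCollapsible {V : Type*} (K : SComplex V) : Prop := SCAux K.faces

/-- `F` strongly collapses to `G` by a sequence of removals of dominated vertices. -/
inductive SCTo {V : Type*} : (Finset V → Prop) → (Finset V → Prop) → Prop
  | refl (F : Finset V → Prop) : SCTo F F
  | step (F G : Finset V → Prop) (w w' : V) (hne : w ≠ w') (hw : F {w}) (hw' : F {w'})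
      (hdom : ∀ σ, (F σ ∧ ∀ τ, F τ → σ ⊆ τ → σ = τ) → w' ∈ σ → w ∈ σ)
      (h : SCTo (fun σ => F σ ∧ w' ∉ σ) G) : SCTo F G

/-- Collapsibility (Forman): removal of free pairs down to a point. -/
inductive CollAux {V : Type*} : (Finset V → Prop) → Prop
  | point (F : Finset V → Prop) (v : V) (h : ∀ σ, F σ ↔ σ = {v}) : CollAux F
  | step (F : Finset V → Prop) (σ τ : Finset V) (hστ : σ ⊂ τ) (hσ : F σ) (hτ : F τ)
      (hfree : ∀ ρ, F ρ → σ ⊂ ρ → ρ = τ)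
      (h : CollAux (fun ρ => F ρ ∧ ρ ≠ σ ∧ ρ ≠ τ)) : CollAux F

def Collapsible {V : Type*} (K : SComplex V) : Prop := CollAux K.faces

/-- The degree of a vertex: the number of edges of `K` containing it. -/
noncomputable def sdeg {V : Type*} (K : SComplex V) (x : V) : ℕ :=
  Set.ncard {σ : Finset V | K.faces σ ∧ σ.card = 2 ∧ x ∈ σ}

/-- Image of a finset, with a classical decidability instance. -/
noncomputable def fimage {V W : Type*} (f : V → W) (σ : Finset V) : Finset W :=
  haveI := Classical.decEq W
  σ.image f

/-- An isomorphism between two simplicial complexes given by face predicates. -/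
structure ComplexIso {V W : Type*} (F : Finset V → Prop) (G : Finset W → Prop) where
  toFun : V → W
  invFun : W → V
  left_inv : ∀ x, F {x} → invFun (toFun x) = x
  right_inv : ∀ y, G {y} → toFun (invFun y) = y
  map_face : ∀ σ, F σ → G (fimage toFun σ)
  inv_face : ∀ τ, G τ → F (fimage invFun τ)

/-- The join of two simplicial complexes. -/
def sJoin {V W : Type*} [DecidableEq V] [DecidableEq W] (K : SComplex V) (L : SComplex W) :
    SComplex (V ⊕ W) :=
  ofGens {σ | ∃ α β, (K.faces α ∨ α = ∅) ∧ (L.faces β ∨ β = ∅) ∧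
    σ = α.image Sum.inl ∪ β.image Sum.inr}

/-- The disjoint union of two simplicial complexes. -/
def sDisjUnion {V W : Type*} [DecidableEq V] [DecidableEq W] (K : SComplex V) (L : SComplex W) :
    SComplex (V ⊕ W) :=
  ofGens ({σ | ∃ α, K.faces α ∧ σ = α.image Sum.inl} ∪
          {σ | ∃ β, L.faces β ∧ σ = β.image Sum.inr})

/-- The simplicial complex of a simple graph (vertices and edges). -/
def graphComplex {V : Type*} [DecidableEq V] (G : SimpleGraph V) : SComplex V :=
  ofGens ({σ | ∃ x, σ = {x}} ∪ {σ | ∃ x y, G.Adj x y ∧ σ = ({x, y} : Finset V)})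

/-- Attach a leaf (pendant edge) to `K` at the vertex `x`. -/
def attachLeaf {V : Type*} [DecidableEq V] (K : SComplex V) (x : V) : SComplex (V ⊕ Unit) :=
  ofGens ({σ | ∃ α, K.faces α ∧ σ = α.image Sum.inl} ∪
          {({Sum.inl x, Sum.inr ()} : Finset (V ⊕ Unit))})

/-- The cycle graph on `ZMod n`. -/
def cycleGraph (n : ℕ) : SimpleGraph (ZMod n) :=
  SimpleGraph.fromRel (fun i j => j = i + 1)

/-- Attach one new leaf to every vertex of a graph. -/
def addLeaves {V : Type*} [DecidableEq V] (G : SimpleGraph V) : SComplex (V ⊕ V) :=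
  ofGens ({σ | ∃ x y, G.Adj x y ∧ σ = ({Sum.inl x, Sum.inl y} : Finset (V ⊕ V))} ∪
          {σ | ∃ u, σ = ({Sum.inl u, Sum.inr u} : Finset (V ⊕ V))})

/-- The geometric realization of `K`, inside `V → ℝ`. -/
def realization {V : Type*} (K : SComplex V) : Set (V → ℝ) :=
  {f | ∃ σ, K.faces σ ∧ (∀ x, 0 ≤ f x) ∧ (∀ x, f x ≠ 0 → x ∈ σ) ∧ ∑ x ∈ σ, f x = 1}

/-- A Hasse-diagram edge of a poset: a covering pair. -/
structure HEdge (P : Type*) [PartialOrder P] where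
  lo : P
  hi : P
  cov : lo ⋖ hi

noncomputable instance {P : Type*} [PartialOrder P] : DecidableEq (HEdge P) :=
  Classical.decEq _

def HEdge.Compat {P : Type*} [PartialOrder P] (p q : HEdge P) : Prop :=
  p.lo ≠ q.lo ∧ p.lo ≠ q.hi ∧ p.hi ≠ q.lo ∧ p.hi ≠ q.hi

def HasPosetCycle {P : Type*} [PartialOrder P] (W : Set (HEdge P)) : Prop :=
  ∃ k : ℕ, 0 < k ∧ ∃ c : ZMod k → HEdge P, (∀ i, c i ∈ W) ∧
    ∀ i, (c (i + 1)).lo ⋖ (c i).hi ∧ (c (i + 1)).lo ≠ (c i).lo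

/-- The generalized Morse complex `f(P)` of a poset: simplices are acyclic
matchings of the Hasse diagram of `P`. -/
def genMorse (P : Type*) [PartialOrder P] : SComplex (HEdge P) where
  faces S := S.Nonempty ∧ (∀ p ∈ S, ∀ q ∈ S, p ≠ q → HEdge.Compat p q) ∧
    ¬ HasPosetCycle {p | p ∈ S}
  not_empty h := by simpa using h.1
  down_closed := by
    rintro σ τ ⟨-, hm, hc⟩ hsub hne
    refine ⟨hne, fun p hp q hq h => hm p (hsub hp) q (hsub hq) h, fun h => hc ?_⟩
    obtain ⟨k, hk, c, hc', hp⟩ := h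
    exact ⟨k, hk, c, fun i => hsub (hc' i), hp⟩

/-- The automorphism group of a simplicial complex, as a subgroup of `Perm V`. -/
def autGroup {V : Type*} [DecidableEq V] (K : SComplex V) : Subgroup (Equiv.Perm V) where
  carrier := {e | ∀ σ : Finset V, K.faces σ ↔ K.faces (σ.image e)}
  one_mem' := by intro σ; simp
  mul_mem' := by
    intro a b ha hb σ
    rw [hb σ, ha (σ.image b)]
    simp [Finset.image_image, Equiv.Perm.coe_mul]
  inv_mem' := by
    intro a ha σ
    have := ha (σ.image ⇑a⁻¹)
    simpa [Finset.image_image, Function.comp_def,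
      Finset.image_id'] using this.symm

/-- The full subcomplex of `K` on a set `S` of vertices. -/
def restrictTo {V : Type*} (K : SComplex V) (S : Set V) : Finset V → Prop :=
  fun σ => K.faces σ ∧ ∀ x ∈ σ, x ∈ S

/-- `S` spans a fully connected subcomplex: `K = (K∣S) * (K∣Sᶜ)`. -/
def FullyConnected {V : Type*} [DecidableEq V] (K : SComplex V) (S : Set V) : Prop :=
  ∀ σ : Finset V, K.faces σ ↔ (σ.Nonempty ∧ ∃ α β : Finset V,
    (restrictTo K S α ∨ α = ∅) ∧ ((K.faces β ∧ ∀ x ∈ β, x ∉ S) ∨ β = ∅) ∧ σ = α ∪ β)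

/-- The primitive pair `(x, xy)` on an edge `{x,y}`. -/
def edgePair {V : Type*} [DecidableEq V] (K : SComplex V) (x y : V) (hxy : x ≠ y)
    (h : K.faces {x, y}) : VPair K where
  lo := {x}
  hi := {x, y}
  lo_face := K.down_closed h (by simp) (Finset.singleton_nonempty x)
  hi_face := h
  lo_sub := by simp
  card_eq := by
    rw [Finset.card_singleton, Finset.card_insert_of_notMem (by simp [hxy]),
      Finset.card_singleton]

/-!
Every pair `(v, va)`, for `va` an edge of `K`, is dominated in `M(K ∨_v ℓ)` by the pair `(w, vw)`:
a gradient vector field containing `(v, va)` cannot contain `(v, vw)`, and since `w` is a free face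
of `vw`, the pair `(w, vw)` can then be added to it. Removing these pairs one at a time leaves the
gradient vector fields avoiding them. The simplices of `K ∨_v ℓ` are the elements of
`(H(K) − v) ⊔ H(ℓ)` (with `v` read as a vertex of `ℓ`), and the remaining pairs are exactly its
Hasse-diagram edges: only the covers `v ⋖ va` are lost. They do not matter for acyclicity either,
since a closed path stepping down to `v` would continue with `(v, vw)` and then `(w, vw)`, two pairs
sharing `vw`.
-/

theorem Finset.covBy_iff_subset_and_card {α : Type*} {s t : Finset α} :
    s ⋖ t ↔ s ⊆ t ∧ t.card = s.card + 1 := by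
  classical
  rw [Finset.covBy_iff_card_sdiff_eq_one]
  refine and_congr_right fun hst => ?_
  have := Finset.card_le_card hst
  rw [Finset.card_sdiff_of_subset hst]
  omega

theorem Finset.map_covBy_map_iff {α β : Type*} (f : α ↪ β) {s t : Finset α} :
    s.map f ⋖ t.map f ↔ s ⋖ t := by
  simp only [Finset.covBy_iff_subset_and_card, Finset.map_subset_map, Finset.card_map]

theorem Subtype.covBy_iff_of_ordConnected {α : Type*} [PartialOrder α] {p : α → Prop}
    (hp : Set.OrdConnected {x | p x}) {a b : Subtype p} : a ⋖ b ↔ (a : α) ⋖ b :=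
  (Set.OrdConnected.apply_covBy_apply_iff (OrderEmbedding.subtype p)
    (by rwa [OrderEmbedding.coe_subtype, Subtype.range_coe_subtype])).symm

section SumCovBy

variable {α β : Type*} [PartialOrder α] [PartialOrder β]

theorem Sum.inl_covBy_inl_iff {a b : α} : (Sum.inl a : α ⊕ β) ⋖ Sum.inl b ↔ a ⋖ b := by
  refine ⟨fun h => ⟨Sum.inl_lt_inl_iff.1 h.1, fun c hac hcb =>
    h.2 (Sum.inl_lt_inl_iff.2 hac) (Sum.inl_lt_inl_iff.2 hcb)⟩,
    fun h => ⟨Sum.inl_lt_inl_iff.2 h.1, ?_⟩⟩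
  rintro (c | c) hac hcb
  · exact h.2 (Sum.inl_lt_inl_iff.1 hac) (Sum.inl_lt_inl_iff.1 hcb)
  · exact Sum.not_inr_lt_inl hcb

theorem Sum.inr_covBy_inr_iff {a b : β} : (Sum.inr a : α ⊕ β) ⋖ Sum.inr b ↔ a ⋖ b := by
  refine ⟨fun h => ⟨Sum.inr_lt_inr_iff.1 h.1, fun c hac hcb =>
    h.2 (Sum.inr_lt_inr_iff.2 hac) (Sum.inr_lt_inr_iff.2 hcb)⟩,
    fun h => ⟨Sum.inr_lt_inr_iff.2 h.1, ?_⟩⟩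
  rintro (c | c) hac hcb
  · exact Sum.not_inr_lt_inl hac
  · exact h.2 (Sum.inr_lt_inr_iff.1 hac) (Sum.inr_lt_inr_iff.1 hcb)

theorem Sum.not_inl_covBy_inr {a : α} {b : β} : ¬ (Sum.inl a : α ⊕ β) ⋖ Sum.inr b :=
  fun h => Sum.not_inl_lt_inr h.1

theorem Sum.not_inr_covBy_inl {a : β} {b : α} : ¬ (Sum.inr a : α ⊕ β) ⋖ Sum.inl b :=
  fun h => Sum.not_inr_lt_inl h.1

end SumCovBy

theorem mem_fimage {α β : Type*} {f : α → β} {s : Finset α} {b : β} :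
    b ∈ fimage f s ↔ ∃ a ∈ s, f a = b := by
  classical
  unfold fimage
  convert Finset.mem_image

theorem fimage_eq_map {α β : Type*} (f : α ↪ β) (s : Finset α) : fimage f s = s.map f := by
  classical
  rw [Finset.map_eq_image]
  unfold fimage
  congr

theorem SComplex.nonempty_of_faces {V : Type*} {K : SComplex V} {σ : Finset V}
    (h : K.faces σ) : σ.Nonempty :=
  Finset.nonempty_iff_ne_empty.2 fun h' => K.not_empty (h' ▸ h)

theorem SCTo.trans {V : Type*} {F G H : Finset V → Prop} (h₁ : SCTo F G) (h₂ : SCTo G H) :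
    SCTo F H := by
  induction h₁ with
  | refl => exact h₂
  | step F G w w' hne hw hw' hdom _ ih => exact .step F H w w' hne hw hw' hdom (ih h₂)

/-- A facet containing `w'` absorbs `w`, so `w` dominates `w'`. -/
theorem SCTo.remove_of_insert {V : Type*} [DecidableEq V] {F : Finset V → Prop} {w w' : V}
    (hne : w ≠ w') (hw : F {w}) (hw' : F {w'})
    (hins : ∀ σ, F σ → w' ∈ σ → w ∉ σ → F (insert w σ)) :
    SCTo F (fun σ => F σ ∧ w' ∉ σ) := by
  refine .step F _ w w' hne hw hw' (fun σ ⟨hσ, hmax⟩ hw'σ => ?_) (.refl _)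
  by_contra hwσ
  exact hwσ (hmax _ (hins σ hσ hw'σ hwσ) (Finset.subset_insert w σ) ▸ Finset.mem_insert_self w σ)

theorem SCTo.removeAll_of_insert {V : Type*} [DecidableEq V] {F : Finset V → Prop} {w : V}
    (R : Finset V) (hwR : w ∉ R) (hw : F {w}) (hR : ∀ r ∈ R, F {r})
    (hins : ∀ r ∈ R, ∀ σ, F σ → r ∈ σ → w ∉ σ → F (insert w σ)) :
    SCTo F (fun σ => F σ ∧ ∀ r ∈ R, r ∉ σ) := by
  induction R using Finset.induction_on with
  | empty => simpa using SCTo.refl F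
  | insert r R hrR ih =>
    rw [Finset.mem_insert, not_or] at hwR
    simp only [Finset.forall_mem_insert] at hR hins ⊢
    have hrem : SCTo (fun σ => F σ ∧ ∀ r ∈ R, r ∉ σ)
        (fun σ => (F σ ∧ ∀ r ∈ R, r ∉ σ) ∧ r ∉ σ) :=
      SCTo.remove_of_insert hwR.1 ⟨hw, by simpa using hwR.2⟩ ⟨hR.1, by simpa using hrR⟩
        fun σ ⟨hσ, hRσ⟩ hrσ hwσ => ⟨hins.1 σ hσ hrσ hwσ, fun r' hr' hr'σ =>
          (Finset.mem_insert.1 hr'σ).elim (fun h => hwR.2 (h ▸ hr')) (hRσ r' hr')⟩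
    convert (ih hwR.2 hR.2 hins.2).trans hrem using 2
    tauto

section Morse

variable {V : Type*} {K : SComplex V}

theorem VPair.ext {p q : VPair K} (hlo : p.lo = q.lo) (hhi : p.hi = q.hi) : p = q := by
  cases p; cases q; cases hlo; cases hhi; rfl

theorem HEdge.ext {P : Type*} [PartialOrder P] {p q : HEdge P} (hlo : p.lo = q.lo)
    (hhi : p.hi = q.hi) : p = q := by
  cases p; cases q; cases hlo; cases hhi; rfl

instance [Finite V] : Finite (VPair K) :=
  Finite.of_injective (fun p => (p.lo, p.hi)) fun _ _ h =>
    VPair.ext (congrArg Prod.fst h) (congrArg Prod.snd h)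

theorem VPair.lo_covBy_hi (p : VPair K) : p.lo ⋖ p.hi :=
  Finset.covBy_iff_subset_and_card.2 ⟨p.lo_sub, p.card_eq⟩

def VPair.ofCovBy {σ τ : Finset V} (hσ : K.faces σ) (hτ : K.faces τ) (h : σ ⋖ τ) : VPair K where
  lo := σ
  hi := τ
  lo_face := hσ
  hi_face := hτ
  lo_sub := h.le
  card_eq := (Finset.covBy_iff_subset_and_card.1 h).2

theorem VPair.Compatible.symm {p q : VPair K} (h : p.Compatible q) : q.Compatible p :=
  ⟨h.1.symm, h.2.2.1.symm, h.2.1.symm, h.2.2.2.symm⟩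

theorem MorseComplex.faces_singleton (p : VPair K) : (MorseComplex K).faces {p} := by
  refine ⟨Finset.singleton_nonempty p, fun q hq q' hq' hne => ?_, ?_⟩
  · simp only [Set.mem_ofPred_eq, Finset.mem_singleton] at hq hq'
    exact (hne (hq.trans hq'.symm)).elim
  · rintro ⟨k, -, c, hc, hpath⟩
    have hc : ∀ i, c i = p := fun i => Finset.mem_singleton.1 (hc i)
    exact (hpath 0).2.1 (by rw [hc, hc])

/-- A closed path entering `p` would have to come from a pair with upper simplex `p.hi`, that is,
from `p` itself. -/
theorem IsGVF.insert_of_free {S : Finset (VPair K)} {p : VPair K} (hS : IsGVF {q | q ∈ S})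
    (hfree : ∀ τ, K.faces τ → p.lo ⊂ τ → τ = p.hi) (hp : ∀ q ∈ S, p.Compatible q) :
    IsGVF {q | q ∈ insert p S} := by
  refine ⟨?_, ?_⟩
  · simp only [IsDVF, Set.mem_ofPred_eq, Finset.mem_insert]
    rintro q (rfl | hq) q' (rfl | hq') hne
    · exact (hne rfl).elim
    · exact hp q' hq'
    · exact (hp q hq).symm
    · exact hS.1 q hq q' hq' hne
  · rintro ⟨k, hk, c, hc, hpath⟩
    refine hS.2 ⟨k, hk, c, fun i => (Finset.mem_insert.1 (hc i)).resolve_left fun hi => ?_, hpath⟩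
    obtain ⟨hsub, hne, hcard⟩ := hpath (i - 1)
    rw [sub_add_cancel, hi] at hsub hne hcard
    have hhi : (c (i - 1)).hi = p.hi := hfree _ (c (i - 1)).hi_face
      (Finset.ssubset_iff_subset_ne.2 ⟨hsub, fun h => by rw [h] at hcard; omega⟩)
    rcases Finset.mem_insert.1 (hc (i - 1)) with h | h
    · exact hne (by rw [h])
    · exact (hp _ h).2.2.2 hhi.symm

end Morse

theorem inr_notMem_map_inl {V : Type*} (α : Finset V) :
    Sum.inr () ∉ α.map (.inl : V ↪ V ⊕ Unit) := by
  simp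

section Leaf

variable {V : Type*} [DecidableEq V] {K : SComplex V} {v : V}

variable (v) in
def leafEdge : Finset (V ⊕ Unit) := {Sum.inl v, Sum.inr ()}

theorem card_leafEdge : (leafEdge v).card = 2 := by
  simp [leafEdge]

theorem attachLeaf_faces_iff {σ : Finset (V ⊕ Unit)} :
    (attachLeaf K v).faces σ ↔
      (∃ α, K.faces α ∧ σ = α.map .inl) ∨ (σ.Nonempty ∧ σ ⊆ leafEdge v) := by
  have himage (α : Finset V) : α.image Sum.inl = α.map (.inl : V ↪ V ⊕ Unit) := by
    rw [Finset.map_eq_image]; rfl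
  simp only [attachLeaf, ofGens, Set.mem_union, Set.mem_ofPred_eq, Set.mem_singleton_iff, himage]
  constructor
  · rintro ⟨hne, τ, ⟨α, hα, rfl⟩ | rfl, hsub⟩
    · obtain ⟨β, hβα, rfl⟩ := Finset.subset_map_iff.1 hsub
      exact .inl ⟨β, K.down_closed hα hβα (Finset.map_nonempty.1 hne), rfl⟩
    · exact .inr ⟨hne, hsub⟩
  · rintro (⟨α, hα, rfl⟩ | ⟨hne, hsub⟩)
    · exact ⟨(K.nonempty_of_faces hα).map, _, .inl ⟨α, hα, rfl⟩, subset_rfl⟩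
    · exact ⟨hne, _, .inr rfl, hsub⟩

theorem subset_leafEdge_of_inr_mem {σ : Finset (V ⊕ Unit)} (hσ : (attachLeaf K v).faces σ)
    (hw : Sum.inr () ∈ σ) : σ ⊆ leafEdge v := by
  rcases attachLeaf_faces_iff.1 hσ with ⟨α, -, rfl⟩ | ⟨-, hsub⟩
  · exact (inr_notMem_map_inl α hw).elim
  · exact hsub

theorem eq_singleton_inl_of_subset_leafEdge {σ : Finset (V ⊕ Unit)} (hne : σ.Nonempty)
    (hsub : σ ⊆ leafEdge v) (hw : Sum.inr () ∉ σ) : σ = {Sum.inl v} := by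
  refine hne.subset_singleton_iff.1 fun x hx => ?_
  rcases Finset.mem_insert.1 (hsub hx) with rfl | hx'
  · exact Finset.mem_singleton_self _
  · exact (hw (Finset.mem_singleton.1 hx' ▸ hx)).elim

theorem eq_or_eq_of_subset_leafEdge {σ : Finset (V ⊕ Unit)} (hsub : σ ⊆ leafEdge v)
    (hcard : σ.card = 1) : σ = {Sum.inl v} ∨ σ = {Sum.inr ()} := by
  obtain ⟨x, rfl⟩ := Finset.card_eq_one.1 hcard
  simpa [leafEdge] using hsub

theorem eq_leafEdge_of_inr_ssubset {τ : Finset (V ⊕ Unit)} (hτ : (attachLeaf K v).faces τ)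
    (h : {Sum.inr ()} ⊂ τ) : τ = leafEdge v := by
  have hsub := subset_leafEdge_of_inr_mem hτ (h.subset (Finset.mem_singleton_self _))
  refine Finset.eq_of_subset_of_card_le hsub ?_
  have := Finset.card_lt_card h
  rw [Finset.card_singleton] at this
  rw [card_leafEdge]
  omega

variable (K v) in
def tipPair : VPair (attachLeaf K v) :=
  .ofCovBy (attachLeaf_faces_iff.2 (.inr ⟨Finset.singleton_nonempty _, by simp [leafEdge]⟩))
    (attachLeaf_faces_iff.2 (.inr ⟨by simp [leafEdge], subset_rfl⟩))
    (Finset.covBy_insert (by simp) : {Sum.inr ()} ⋖ leafEdge v)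

theorem eq_tipPair_of_lo {q : VPair (attachLeaf K v)} (h : q.lo = {Sum.inr ()}) :
    q = tipPair K v :=
  VPair.ext h (eq_leafEdge_of_inr_ssubset q.hi_face (h ▸ q.lo_covBy_hi.lt))

theorem lo_eq_of_hi_eq_leafEdge {q : VPair (attachLeaf K v)} (h : q.hi = leafEdge v) :
    q.lo = {Sum.inl v} ∨ q.lo = {Sum.inr ()} := by
  refine eq_or_eq_of_subset_leafEdge (h ▸ q.lo_sub) ?_
  have := q.card_eq
  rw [h, card_leafEdge] at this
  omega

theorem tipPair_compatible {q : VPair (attachLeaf K v)} (h : q.hi ≠ leafEdge v) :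
    (tipPair K v).Compatible q := by
  have hlo := (SComplex.nonempty_of_faces q.lo_face).card_pos
  have hcard := q.card_eq
  refine ⟨fun hq => h ?_, fun hq => ?_, fun hq => ?_, fun hq => h hq.symm⟩
  · rw [eq_tipPair_of_lo hq.symm]; rfl
  · have : q.hi.card = 1 := by rw [← hq]; rfl
    omega
  · have hsub := subset_leafEdge_of_inr_mem q.hi_face
      (q.lo_sub (by rw [← hq]; simp [tipPair, VPair.ofCovBy, leafEdge]))
    have := Finset.card_le_card hsub
    rw [← hq] at hcard
    simp only [tipPair, VPair.ofCovBy, card_leafEdge] at hcard this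
    omega

variable (v) in
/-- The pairs `(v, va)` for an edge `va` of `K`: these are the vertices of the Morse complex that
the collapse removes. -/
def IsInnerPair (q : VPair (attachLeaf K v)) : Prop :=
  q.lo = {Sum.inl v} ∧ q.hi ≠ leafEdge v

theorem not_isInnerPair_tipPair : ¬ IsInnerPair v (tipPair K v) := fun h => by
  simpa [tipPair, VPair.ofCovBy] using h.1

theorem morseComplex_faces_insert_tipPair {S : Finset (VPair (attachLeaf K v))}
    (hS : (MorseComplex (attachLeaf K v)).faces S) {p : VPair (attachLeaf K v)} (hpS : p ∈ S)
    (hp : IsInnerPair v p) (htip : tipPair K v ∉ S) :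
    (MorseComplex (attachLeaf K v)).faces (insert (tipPair K v) S) := by
  refine ⟨Finset.insert_nonempty _ _, hS.2.insert_of_free
    (fun τ hτ h => eq_leafEdge_of_inr_ssubset hτ h) fun q hq => tipPair_compatible fun hhi => ?_⟩
  rcases lo_eq_of_hi_eq_leafEdge hhi with hlo | hlo
  · have hne : q ≠ p := fun h => hp.2 (h ▸ hhi)
    exact (hS.2.1 q hq p hpS hne).1 (hlo.trans hp.1.symm)
  · exact htip (eq_tipPair_of_lo hlo ▸ hq)

theorem scTo_removeInnerPairs [Finite V] :
    SCTo (MorseComplex (attachLeaf K v)).faces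
      (fun S => (MorseComplex (attachLeaf K v)).faces S ∧ ∀ q ∈ S, ¬ IsInnerPair v q) := by
  have hfin := Set.toFinite {q : VPair (attachLeaf K v) | IsInnerPair v q}
  have h := SCTo.removeAll_of_insert hfin.toFinset (by simpa using not_isInnerPair_tipPair)
    (MorseComplex.faces_singleton _) (fun r _ => MorseComplex.faces_singleton r)
    fun r hr S hS hrS htS =>
      morseComplex_faces_insert_tipPair hS hrS (hfin.mem_toFinset.1 hr) htS
  convert h using 3 with S
  simp only [Set.Finite.mem_toFinset, Set.mem_ofPred_eq]
  exact ⟨fun h r hr hrS => h r hrS hr, fun h q hqS hq => h q hq hqS⟩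

end Leaf

theorem graphComplex_pathGraph_two_faces_iff {σ : Finset (Fin 2)} :
    (graphComplex (SimpleGraph.pathGraph 2)).faces σ ↔ σ.Nonempty := by
  refine ⟨fun h => h.1, fun h => ⟨h, {0, 1}, .inr ⟨0, 1, ?_, rfl⟩, fun x _ => ?_⟩⟩
  · simp [SimpleGraph.pathGraph_adj]
  · fin_cases x <;> simp

theorem ordConnected_faces_ne_singleton {V : Type*} {K : SComplex V} {v : V} :
    Set.OrdConnected {σ | K.faces σ ∧ σ ≠ {v}} := by
  refine ⟨fun σ ⟨hσ, hσv⟩ τ ⟨hτ, _⟩ ρ ⟨hσρ, hρτ⟩ => ⟨K.down_closed hτ hρτ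
    ((K.nonempty_of_faces hσ).mono hσρ), fun hρ => hσv ?_⟩⟩
  exact (K.nonempty_of_faces hσ).subset_singleton_iff.1 (hρ ▸ hσρ)

theorem ordConnected_pathGraph_two_faces :
    Set.OrdConnected {σ | (graphComplex (SimpleGraph.pathGraph 2)).faces σ} := by
  refine ⟨fun σ hσ τ _ ρ ⟨hσρ, _⟩ => ?_⟩
  simp only [Set.mem_ofPred_eq, graphComplex_pathGraph_two_faces_iff] at hσ ⊢
  exact hσ.mono hσρ

/-- The leaf `ℓ` is the path graph on `Fin 2`; its vertices `0` and `1` stand for `v` and the new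
vertex `w = Sum.inr ()`. -/
def leafEmb {V : Type*} (v : V) : Fin 2 ↪ V ⊕ Unit :=
  ⟨![Sum.inl v, Sum.inr ()], by intro i j; fin_cases i <;> fin_cases j <;> simp⟩

@[simp] theorem leafEmb_zero {V : Type*} (v : V) : leafEmb v 0 = Sum.inl v := rfl

@[simp] theorem leafEmb_one {V : Type*} (v : V) : leafEmb v 1 = Sum.inr () := rfl

section LeafPoset

variable {V : Type*} [DecidableEq V] {K : SComplex V} {v : V}

variable (K v) in
/-- The poset `(H(K) − v) ⊔ H(ℓ)`. -/
abbrev LeafPoset : Type _ := {σ : Finset V // K.faces σ ∧ σ ≠ {v}} ⊕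
  {σ : Finset (Fin 2) // (graphComplex (SimpleGraph.pathGraph 2)).faces σ}

theorem map_univ_leafEmb : (Finset.univ : Finset (Fin 2)).map (leafEmb v) = leafEdge v := by
  ext x
  simp [leafEdge, Fin.exists_fin_two, eq_comm]

variable (K v) in
def realize : LeafPoset K v → Finset (V ⊕ Unit) :=
  Sum.elim (fun α => α.1.map .inl) (fun σ => σ.1.map (leafEmb v))

theorem realize_inr_subset (σ) : realize K v (.inr σ) ⊆ leafEdge v :=
  map_univ_leafEmb (v := v) ▸ Finset.map_subset_map.2 (Finset.subset_univ _)

theorem not_realize_inl_subset (α) : ¬ realize K v (.inl α) ⊆ leafEdge v := by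
  intro h
  refine α.2.2 ((K.nonempty_of_faces α.2.1).subset_singleton_iff.1 fun x hx => ?_)
  simpa [leafEdge] using h (Finset.mem_map_of_mem _ hx)

theorem realize_faces (x : LeafPoset K v) : (attachLeaf K v).faces (realize K v x) := by
  rcases x with α | σ
  · exact attachLeaf_faces_iff.2 (.inl ⟨α, α.2.1, rfl⟩)
  · exact attachLeaf_faces_iff.2
      (.inr ⟨(graphComplex_pathGraph_two_faces_iff.1 σ.2).map, realize_inr_subset σ⟩)

theorem realize_injective : Function.Injective (realize K v) := by
  rintro (α | σ) (β | τ) h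
  · exact congrArg Sum.inl (Subtype.ext (Finset.map_inj.1 h))
  · exact (not_realize_inl_subset α (h ▸ realize_inr_subset τ)).elim
  · exact (not_realize_inl_subset β (h ▸ realize_inr_subset σ)).elim
  · exact congrArg Sum.inr (Subtype.ext (Finset.map_inj.1 h))

theorem exists_realize_eq {σ : Finset (V ⊕ Unit)} (hσ : (attachLeaf K v).faces σ) :
    ∃ x, realize K v x = σ := by
  rcases attachLeaf_faces_iff.1 hσ with ⟨α, hα, rfl⟩ | ⟨hne, hsub⟩
  · by_cases hαv : α = {v}
    · refine ⟨.inr ⟨{0}, graphComplex_pathGraph_two_faces_iff.2 (Finset.singleton_nonempty _)⟩, ?_⟩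
      simp [realize, hαv]
    · exact ⟨.inl ⟨α, hα, hαv⟩, rfl⟩
  · rw [← map_univ_leafEmb] at hsub
    obtain ⟨u, -, rfl⟩ := Finset.subset_map_iff.1 hsub
    exact ⟨.inr ⟨u, graphComplex_pathGraph_two_faces_iff.2 (Finset.map_nonempty.1 hne)⟩, rfl⟩

/-- The covering relation of the poset is that of the face poset of `K ∨_v ℓ`, with the covers
of `v` by the edges of `K` removed. -/
theorem covBy_iff_realize {x y : LeafPoset K v} :
    x ⋖ y ↔ realize K v x ⋖ realize K v y ∧
      (realize K v x = {Sum.inl v} → realize K v y = leafEdge v) := by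
  rcases x with α | σ <;> rcases y with β | τ
  · have hα : realize K v (.inl α) ≠ {Sum.inl v} := fun h =>
      α.2.2 (Finset.map_inj.1 (by rw [Finset.map_singleton]; exact h))
    rw [Sum.inl_covBy_inl_iff, Subtype.covBy_iff_of_ordConnected ordConnected_faces_ne_singleton,
      ← Finset.map_covBy_map_iff .inl]
    exact (and_iff_left fun h => (hα h).elim).symm
  · refine iff_of_false Sum.not_inl_covBy_inr fun h => not_realize_inl_subset α ?_
    exact h.1.le.trans (realize_inr_subset τ)
  · refine iff_of_false Sum.not_inr_covBy_inl fun ⟨hcov, hv⟩ => not_realize_inl_subset β ?_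
    have hσ := eq_singleton_inl_of_subset_leafEdge
      (graphComplex_pathGraph_two_faces_iff.1 σ.2).map (realize_inr_subset (K := K) σ)
      fun hw => inr_notMem_map_inl β.1 (hcov.le hw)
    exact (hv hσ).le
  · rw [Sum.inr_covBy_inr_iff, Subtype.covBy_iff_of_ordConnected ordConnected_pathGraph_two_faces,
      ← Finset.map_covBy_map_iff (leafEmb v)]
    refine (and_iff_left_of_imp fun h hσ => ?_).symm
    refine Finset.eq_of_subset_of_card_le (realize_inr_subset τ) ?_
    change σ.1.map (leafEmb v) = _ at hσ
    change _ ≤ (τ.1.map (leafEmb v)).card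
    rw [card_leafEdge, (Finset.covBy_iff_subset_and_card.1 h).2, hσ, Finset.card_singleton]

end LeafPoset

section LeafIso

variable {V : Type*} [DecidableEq V] {K : SComplex V} {v : V}

variable (K v) in
def vpairOf : HEdge (LeafPoset K v) ↪ VPair (attachLeaf K v) where
  toFun h := .ofCovBy (realize_faces h.lo) (realize_faces h.hi) (covBy_iff_realize.1 h.cov).1
  inj' _ _ he := HEdge.ext (realize_injective (congrArg VPair.lo he))
    (realize_injective (congrArg VPair.hi he))

theorem not_isInnerPair_vpairOf (h : HEdge (LeafPoset K v)) : ¬ IsInnerPair v (vpairOf K v h) :=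
  not_and_not_right.2 (covBy_iff_realize.1 h.cov).2

theorem exists_vpairOf_eq {q : VPair (attachLeaf K v)} (hq : ¬ IsInnerPair v q) :
    ∃ h, vpairOf K v h = q := by
  obtain ⟨x, hx⟩ := exists_realize_eq q.lo_face
  obtain ⟨y, hy⟩ := exists_realize_eq q.hi_face
  have hxy : x ⋖ y := covBy_iff_realize.2
    ⟨hx ▸ hy ▸ q.lo_covBy_hi, hx ▸ hy ▸ not_and_not_right.1 hq⟩
  exact ⟨⟨x, y, hxy⟩, VPair.ext hx hy⟩

instance : Nonempty (HEdge (LeafPoset K v)) :=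
  (exists_vpairOf_eq not_isInnerPair_tipPair).elim fun h _ => ⟨h⟩

theorem vpairOf_compatible_iff {h h' : HEdge (LeafPoset K v)} :
    (vpairOf K v h).Compatible (vpairOf K v h') ↔ h.Compat h' := by
  simp only [VPair.Compatible, HEdge.Compat, vpairOf, VPair.ofCovBy, Function.Embedding.coeFn_mk,
    realize_injective.ne_iff]

/-- A closed path through `(v, vw)` would continue with `(w, vw)`, and the two pairs share `vw`. -/
theorem lo_ne_of_closedPath {W : Set (VPair (attachLeaf K v))} (hW : IsDVF W)
    (hinner : ∀ q ∈ W, ¬ IsInnerPair v q) {k : ℕ} {c : ZMod k → VPair (attachLeaf K v)}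
    (hc : ∀ i, c i ∈ W)
    (hpath : ∀ i, (c (i + 1)).lo ⊆ (c i).hi ∧ (c (i + 1)).lo ≠ (c i).lo ∧
      (c (i + 1)).lo.card + 1 = (c i).hi.card) (i : ZMod k) :
    (c i).lo ≠ {Sum.inl v} := by
  intro hlo
  have hhi : (c i).hi = leafEdge v := not_and_not_right.1 (hinner _ (hc i)) hlo
  obtain ⟨hsub, hne, hcard⟩ := hpath i
  rw [hhi] at hsub hcard
  rw [hlo] at hne
  rw [card_leafEdge] at hcard
  have hnext : (c (i + 1)).lo = {Sum.inr ()} :=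
    (eq_or_eq_of_subset_leafEdge hsub (by omega)).resolve_left hne
  have hnext_hi : (c (i + 1)).hi = leafEdge v := by rw [eq_tipPair_of_lo hnext]; rfl
  exact (hW _ (hc _) _ (hc i) fun h => hne (h ▸ hlo)).2.2.2 (hnext_hi.trans hhi.symm)

theorem hasClosedPath_map_vpairOf_iff {τ : Finset (HEdge (LeafPoset K v))}
    (hτ : IsDVF {q | q ∈ τ.map (vpairOf K v)}) :
    HasClosedPath {q | q ∈ τ.map (vpairOf K v)} ↔ HasPosetCycle {h | h ∈ τ} := by
  constructor
  · rintro ⟨k, hk, c, hc, hpath⟩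
    choose d hdτ hd using fun i => Finset.mem_map.1 (hc i)
    have hlo (i) : realize K v (d i).lo = (c i).lo := congrArg VPair.lo (hd i)
    have hhi (i) : realize K v (d i).hi = (c i).hi := congrArg VPair.hi (hd i)
    have hinner : ∀ q ∈ {q | q ∈ τ.map (vpairOf K v)}, ¬ IsInnerPair v q := fun q hq => by
      obtain ⟨h, -, rfl⟩ := Finset.mem_map.1 hq
      exact not_isInnerPair_vpairOf h
    refine ⟨k, hk, d, hdτ, fun i => ⟨covBy_iff_realize.2 ⟨?_, fun h => ?_⟩, fun h => ?_⟩⟩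
    · rw [hlo, hhi]
      exact Finset.covBy_iff_subset_and_card.2 ⟨(hpath i).1, (hpath i).2.2.symm⟩
    · exact (lo_ne_of_closedPath hτ hinner hc hpath (i + 1) (hlo _ ▸ h)).elim
    · exact (hpath i).2.1 (by rw [← hlo, ← hlo, h])
  · rintro ⟨k, hk, c, hc, hpath⟩
    refine ⟨k, hk, vpairOf K v ∘ c, fun i => Finset.mem_map_of_mem _ (hc i), fun i => ?_⟩
    obtain ⟨hcov, hne⟩ := hpath i
    obtain ⟨hsub, hcard⟩ := Finset.covBy_iff_subset_and_card.1 (covBy_iff_realize.1 hcov).1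
    exact ⟨hsub, fun h => hne (realize_injective h), hcard.symm⟩

theorem morseComplex_faces_map_vpairOf_iff {τ : Finset (HEdge (LeafPoset K v))} :
    (MorseComplex (attachLeaf K v)).faces (τ.map (vpairOf K v)) ↔
      (genMorse (LeafPoset K v)).faces τ := by
  have hdvf : IsDVF {q | q ∈ τ.map (vpairOf K v)} ↔
      ∀ p ∈ τ, ∀ q ∈ τ, p ≠ q → p.Compat q := by
    simp only [IsDVF, Set.mem_ofPred_eq, Finset.forall_mem_map, (vpairOf K v).injective.ne_iff,
      vpairOf_compatible_iff]
  simp only [MorseComplex, genMorse, IsGVF, Finset.map_nonempty]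
  refine and_congr_right fun _ => ⟨fun ⟨h₁, h₂⟩ => ⟨hdvf.1 h₁, ?_⟩, fun ⟨h₁, h₂⟩ => ⟨hdvf.2 h₁, ?_⟩⟩
  · rwa [← hasClosedPath_map_vpairOf_iff h₁]
  · rwa [hasClosedPath_map_vpairOf_iff (hdvf.2 h₁)]

variable (K v) in
noncomputable def vpairIso :
    ComplexIso (fun S => (MorseComplex (attachLeaf K v)).faces S ∧ ∀ q ∈ S, ¬ IsInnerPair v q)
      (genMorse (LeafPoset K v)).faces where
  toFun := Function.invFun (vpairOf K v)
  invFun := vpairOf K v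
  left_inv q hq := Function.invFun_eq (exists_vpairOf_eq (hq.2 q (Finset.mem_singleton_self q)))
  right_inv h _ := Function.leftInverse_invFun (vpairOf K v).injective h
  map_face S hS := by
    have hinv {q} (hq : q ∈ S) := Function.invFun_eq (exists_vpairOf_eq (hS.2 q hq))
    have hS' : (fimage (Function.invFun (vpairOf K v)) S).map (vpairOf K v) = S := by
      ext q
      simp only [Finset.mem_map, mem_fimage]
      constructor
      · rintro ⟨_, ⟨p, hp, rfl⟩, rfl⟩
        rwa [hinv hp]
      · exact fun hq => ⟨_, ⟨q, hq, rfl⟩, hinv hq⟩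
    exact morseComplex_faces_map_vpairOf_iff.1 (by rw [hS']; exact hS.1)
  inv_face T hT := by
    rw [fimage_eq_map]
    refine ⟨morseComplex_faces_map_vpairOf_iff.2 hT, fun q hq => ?_⟩
    obtain ⟨h, -, rfl⟩ := Finset.mem_map.1 hq
    exact not_isInnerPair_vpairOf h

end LeafIso

theorem stmt_19_general {V : Type*} [Fintype V] [DecidableEq V] (K : SComplex V) (v : V) :
    ∃ G, SCTo (MorseComplex (attachLeaf K v)).faces G ∧
      Nonempty (ComplexIso G
        (genMorse ({σ : Finset V // K.faces σ ∧ σ ≠ {v}} ⊕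
          {σ : Finset (Fin 2) // (graphComplex (SimpleGraph.pathGraph 2)).faces σ})).faces) :=
  ⟨_, scTo_removeInnerPairs, ⟨vpairIso K v⟩⟩

/-- `M(K ∨_v ℓ)` strongly collapses to the generalized Morse
complex `f((H(K) − v) ⊔ H(ℓ))`. -/
theorem stmt_19 {V : Type*} [Fintype V] [DecidableEq V] (K : SComplex V) (v : V)
    (hv : K.faces {v}) :
    ∃ G, SCTo (MorseComplex (attachLeaf K v)).faces G ∧
      Nonempty (ComplexIso G
        (genMorse ({σ : Finset V // K.faces σ ∧ σ ≠ {v}} ⊕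
          {σ : Finset (Fin 2) // (graphComplex (SimpleGraph.pathGraph 2)).faces σ})).faces) :=
  stmt_19_general K v
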